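/- arXiv:1812.09436 — 2 statements merged into one kernel-verified Lean document; each statement's English description precedes it below -/
import Mathlib

section
/- Let k ≥ 2 and n ≥ 2 be integers, F the free group on generators φ_1, …, φ_n, and Ψ : F → (ℤ/kℤ)^n the homomorphism sending φ_i to the i-th standard basis vector. Then the abelianization (ker Ψ)/[ker Ψ, ker Ψ] is generated by the classes of the elements φ_i^k for 1 ≤ i ≤ n, together with the classes of the elements (φ_1^{g_1}⋯φ_n^{g_n})·[φ_j, φ_l]·(φ_1^{g_1}⋯φ_n^{g_n})⁻¹ for all integers 1 ≤ j < l ≤ n and 0 ≤ g_d ≤ k−1 (d = 1, …, n). (This gives a finite generating set for the first homology group of the punctured generalized Fermat curve of type (k,n).) -/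
/-!
Let `H = ker Ψ`. Conjugation by elements of `H` acts trivially on `H^ab`, so for `c ∈ H` and
`w ∈ F` the class of `w c w⁻¹` equals the class of `r c r⁻¹`, where `r` is any representative
of the coset `H w`; the words `φ₁^g₁ ⋯ φₙ^gₙ` with `0 ≤ g_d < k` are such representatives.
Hence it suffices that `H` lies in the subgroup `M` generated by the `φᵢ^k` and the normal
closure of the `[φⱼ, φₗ]`, `j < l`. Modulo `M` the generators commute, so `F ⧸ M` is abelian of
exponent `k` on the images of the `φᵢ`; thus `F → F ⧸ M` factors through `Ψ` and `ker Ψ ≤ M`.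
-/

open scoped commutatorElement

namespace Subgroup

variable {G : Type*} [Group G]

theorem commutator_le_of_closure_eq_top {S : Set G} (hS : closure S = ⊤) (N : Subgroup G)
    [N.Normal] (hSN : ∀ s ∈ S, ∀ t ∈ S, ⁅s, t⁆ ∈ N) : _root_.commutator G ≤ N := by
  rw [← Normal.quotient_commutative_iff_commutator_le]
  set T := QuotientGroup.mk' N '' S
  have hcomm : ∀ x ∈ T, ∀ y ∈ T, x * y = y * x := by
    rintro _ ⟨s, hs, rfl⟩ _ ⟨t, ht, rfl⟩
    rw [← commutatorElement_eq_one_iff_mul_comm, ← map_commutatorElement,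
      QuotientGroup.mk'_apply, QuotientGroup.eq_one_iff]
    exact hSN s hs t ht
  have htop : closure T = ⊤ := by
    rw [← MonoidHom.map_closure, hS, ← MonoidHom.range_eq_map, QuotientGroup.range_mk']
  have hle := htop ▸ closure_le_centralizer_centralizer T
  exact ⟨⟨fun x y =>
    Set.centralizer_centralizer_comm_of_comm hcomm x (hle (mem_top x)) y (hle (mem_top y))⟩⟩

theorem normalClosure_le_map_subtype_comap_of_transversal {H : Subgroup G} [H.Normal]
    {X T : Set G} (A : Subgroup (Abelianization H)) (hX : X ⊆ H) (hT : ∀ w, ∃ r ∈ T, w * r⁻¹ ∈ H)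
    (hA : ∀ r ∈ T, ∀ c ∈ X, ∀ h : r * c * r⁻¹ ∈ H, Abelianization.of ⟨_, h⟩ ∈ A) :
    normalClosure X ≤ (A.comap Abelianization.of).map H.subtype := by
  refine (closure_le _).mpr fun x hx => ?_
  obtain ⟨c, hc, w, rfl⟩ :=
    (Group.mem_conjugatesOfSet_iff.mp hx).imp fun c => And.imp_right isConj_iff.mp
  obtain ⟨r, hr, hwr⟩ := hT w
  have hrc : r * c * r⁻¹ ∈ H := Normal.conj_mem ‹_› c (hX hc) r
  refine ⟨⟨w * r⁻¹, hwr⟩ * ⟨_, hrc⟩ * ⟨w * r⁻¹, hwr⟩⁻¹, ?_, by simp [mul_assoc]⟩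
  rw [SetLike.mem_coe, mem_comap, map_mul, map_mul, map_inv, mul_inv_cancel_comm]
  exact hA r hr c hc hrc

theorem eq_top_of_le_map_subtype_comap {H : Subgroup G} (A : Subgroup (Abelianization H))
    (hA : H ≤ (A.comap Abelianization.of).map H.subtype) : A = ⊤ := by
  refine eq_top_iff.mpr fun a _ => ?_
  obtain ⟨x, rfl⟩ := QuotientGroup.mk_surjective a
  obtain ⟨y, hy, hyx⟩ := hA x.2
  rwa [Subtype.ext hyx] at hy

end Subgroup

theorem exists_monoidHom_zmod_pi {ι Q : Type*} [Fintype ι] [DecidableEq ι] [CommGroup Q] {k : ℕ}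
    (q : ι → Q) (hq : ∀ i, q i ^ k = 1) :
    ∃ τ : Multiplicative (ι → ZMod k) →* Q,
      ∀ i, τ (Multiplicative.ofAdd (Pi.single i 1)) = q i := by
  let τ i : ZMod k →+ Additive Q :=
    ZMod.lift k ⟨zmultiplesHom _ (Additive.ofMul (q i)), by simp [← ofMul_pow, hq]⟩
  have hcomm : Pairwise fun i j => ∀ x y, AddCommute (τ i x) (τ j y) :=
    fun _ _ _ _ _ => AddCommute.all _ _
  refine ⟨AddMonoidHom.toMultiplicativeLeft (AddMonoidHom.noncommPiCoprod τ hcomm), fun i => ?_⟩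
  rw [AddMonoidHom.toMultiplicativeLeft_apply_apply, toAdd_ofAdd,
    AddMonoidHom.noncommPiCoprod_single, ← Int.cast_one, ZMod.lift_coe]
  simp

namespace FreeGroup

open Subgroup

variable {ι : Type*}

theorem commutator_le_normalClosure_commutator_of_lt [LinearOrder ι] :
    _root_.commutator (FreeGroup ι) ≤
      normalClosure {x | ∃ j l : ι, j < l ∧ x = ⁅of j, of l⁆} := by
  refine commutator_le_of_closure_eq_top (closure_range_of ι) _ ?_
  rintro _ ⟨j, rfl⟩ _ ⟨l, rfl⟩
  rcases lt_trichotomy j l with hjl | rfl | hlj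
  · exact subset_normalClosure ⟨j, l, hjl, rfl⟩
  · simp
  · rw [← commutatorElement_inv]
    exact inv_mem (subset_normalClosure ⟨l, j, hlj, rfl⟩)

section ZModPi

variable [DecidableEq ι] {k : ℕ} {Ψ : FreeGroup ι →* Multiplicative (ι → ZMod k)}
  (hΨ : ∀ i, Ψ (of i) = Multiplicative.ofAdd (Pi.single i 1))
include hΨ

theorem of_pow_mem_ker (i : ι) : of i ^ k ∈ Ψ.ker := by
  simp [hΨ, ← ofAdd_nsmul, ← Pi.single_smul]

theorem ker_le_of_commutator_le [Fintype ι] {M : Subgroup (FreeGroup ι)}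
    (hcomm : _root_.commutator (FreeGroup ι) ≤ M) (hpow : ∀ i, of i ^ k ∈ M) : Ψ.ker ≤ M := by
  have := Normal.of_commutator_le _ hcomm
  have := Normal.quotient_commutative_iff_commutator_le.mpr hcomm
  open scoped IsMulCommutative in
  obtain ⟨τ, hτ⟩ := exists_monoidHom_zmod_pi (k := k) (fun i => QuotientGroup.mk' M (of i))
    fun i => by rw [← map_pow, QuotientGroup.mk'_apply, QuotientGroup.eq_one_iff]; exact hpow i
  have hfactor : τ.comp Ψ = QuotientGroup.mk' M := ext_hom _ _ fun i => by simp [hΨ, hτ]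
  calc Ψ.ker ≤ τ.ker.comap Ψ := Ψ.ker_le_comap _
    _ = M := by rw [MonoidHom.comap_ker, hfactor, QuotientGroup.ker_mk']

end ZModPi

def orderedMonomial {n : ℕ} (g : Fin n → ℕ) : FreeGroup (Fin n) :=
  (List.ofFn fun d => of d ^ g d).prod

section Fin

variable {n k : ℕ} {Ψ : FreeGroup (Fin n) →* Multiplicative (Fin n → ZMod k)}
  (hΨ : ∀ i, Ψ (of i) = Multiplicative.ofAdd (Pi.single i 1))
include hΨ

theorem map_orderedMonomial (g : Fin n → ℕ) :
    Ψ (orderedMonomial g) = Multiplicative.ofAdd fun d => (g d : ZMod k) := by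
  rw [orderedMonomial, map_list_prod, List.map_ofFn, List.prod_ofFn]
  simp [hΨ, ← ofAdd_nsmul, ← Pi.single_smul, ← ofAdd_sum, Finset.univ_sum_single]

theorem exists_orderedMonomial_mul_inv_mem_ker [NeZero k] (w : FreeGroup (Fin n)) :
    ∃ r ∈ orderedMonomial '' {g | ∀ d, g d ≤ k - 1}, w * r⁻¹ ∈ Ψ.ker := by
  refine ⟨_, ⟨fun d => ((Ψ w).toAdd d).val, fun d => Nat.le_pred_of_lt (ZMod.val_lt _), rfl⟩, ?_⟩
  rw [MonoidHom.mem_ker, _root_.map_mul, _root_.map_inv, map_orderedMonomial hΨ, mul_inv_eq_one]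
  simp

end Fin

end FreeGroup

open FreeGroup Subgroup

theorem homology_generators_of_punctured_generalized_fermat_general (k n : ℕ) (hk : 2 ≤ k)
    (Ψ : FreeGroup (Fin n) →* Multiplicative (Fin n → ZMod k))
    (hΨ : ∀ i : Fin n, Ψ (FreeGroup.of i) = Multiplicative.ofAdd (Pi.single i 1)) :
    Subgroup.closure
      {a : Abelianization Ψ.ker |
        ∃ x : Ψ.ker, a = Abelianization.of x ∧
          ((∃ i : Fin n, (x : FreeGroup (Fin n)) = FreeGroup.of i ^ k) ∨
            (∃ g : Fin n → ℕ, (∀ d, g d ≤ k - 1) ∧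
              ∃ j l : Fin n, j < l ∧
                (x : FreeGroup (Fin n)) =
                  (List.ofFn fun d : Fin n => FreeGroup.of d ^ g d).prod *
                    ⁅FreeGroup.of j, FreeGroup.of l⁆ *
                    ((List.ofFn fun d : Fin n => FreeGroup.of d ^ g d).prod)⁻¹))} = ⊤ := by
  have : NeZero k := ⟨by omega⟩
  refine eq_top_of_le_map_subtype_comap _ ?_
  calc Ψ.ker ≤ normalClosure {x | ∃ j l : Fin n, j < l ∧ x = ⁅of j, of l⁆} ⊔
        closure (Set.range fun i => of i ^ k) :=
      ker_le_of_commutator_le hΨ (commutator_le_normalClosure_commutator_of_lt.trans le_sup_left)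
        fun i => mem_sup_right (subset_closure ⟨i, rfl⟩)
    _ ≤ _ := by
      refine sup_le
        (normalClosure_le_map_subtype_comap_of_transversal _ ?commutators_mem_ker
          (exists_orderedMonomial_mul_inv_mem_ker hΨ) ?conj_commutators_mem)
        ((closure_le _).mpr ?pows_mem)
      case commutators_mem_ker =>
        rintro _ ⟨j, l, -, rfl⟩
        exact Abelianization.commutator_subset_ker Ψ
          (commutator_mem_commutator (mem_top _) (mem_top _))
      case conj_commutators_mem =>
        rintro _ ⟨g, hg, rfl⟩ _ ⟨j, l, hjl, rfl⟩ -
        exact subset_closure ⟨_, rfl, .inr ⟨g, hg, j, l, hjl, rfl⟩⟩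
      case pows_mem =>
        rintro _ ⟨i, rfl⟩
        exact ⟨⟨_, of_pow_mem_ker hΨ i⟩, subset_closure ⟨_, rfl, .inl ⟨i, rfl⟩⟩, rfl⟩

/-- Let `k ≥ 2`, `n ≥ 2`, `F` the free group on generators `φ_1, …, φ_n`, and
`Ψ : F → (ℤ/kℤ)ⁿ` the homomorphism sending `φ_i` to the `i`-th standard basis vector.
Then the abelianization `(ker Ψ) / [ker Ψ, ker Ψ]` is generated by the classes of the
elements `φ_i ^ k` for `1 ≤ i ≤ n`, together with the classes of the elements
`(φ_1^{g_1} ⋯ φ_n^{g_n}) [φ_j, φ_l] (φ_1^{g_1} ⋯ φ_n^{g_n})⁻¹` for all integers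
`1 ≤ j < l ≤ n` and `0 ≤ g_d ≤ k − 1`. -/
theorem homology_generators_of_punctured_generalized_fermat (k n : ℕ) (hk : 2 ≤ k) (hn : 2 ≤ n)
    (Ψ : FreeGroup (Fin n) →* Multiplicative (Fin n → ZMod k))
    (hΨ : ∀ i : Fin n, Ψ (FreeGroup.of i) = Multiplicative.ofAdd (Pi.single i 1)) :
    Subgroup.closure
      {a : Abelianization Ψ.ker |
        ∃ x : Ψ.ker, a = Abelianization.of x ∧
          ((∃ i : Fin n, (x : FreeGroup (Fin n)) = FreeGroup.of i ^ k) ∨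
            (∃ g : Fin n → ℕ, (∀ d, g d ≤ k - 1) ∧
              ∃ j l : Fin n, j < l ∧
                (x : FreeGroup (Fin n)) =
                  (List.ofFn fun d : Fin n => FreeGroup.of d ^ g d).prod *
                    ⁅FreeGroup.of j, FreeGroup.of l⁆ *
                    ((List.ofFn fun d : Fin n => FreeGroup.of d ^ g d).prod)⁻¹))} = ⊤ :=
  homology_generators_of_punctured_generalized_fermat_general k n hk Ψ hΨ
end

section
/- Let k ≥ 2 and n ≥ 2 be integers, and let r_1 = 0, r_2 = 1, r_3, …, r_n ∈ ℂ be pairwise distinct complex numbers. Let U be a topological space and p : U → ℂ a continuous map whose image is exactly ℂ∖{r_1, …, r_n}. Let f_1, …, f_n : U → ℂ be continuous functions with exp(f_1(u)) = −p(u) and exp(f_i(u)) = p(u) − r_i for 2 ≤ i ≤ n and all u ∈ U, and set x̂_i = exp(f_i/k). Assume that for every tuple (j_1, …, j_n) ∈ ℤ^n there exists a map φ : U → U with p∘φ = p and f_i(φ(u)) = f_i(u) + 2πi·j_i for all i and all u. Then for every tuple (a_1, …, a_n) ∈ ℂ^n with a_i ≠ 0 for all i and with r_i + a_1^k + a_i^k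 = 0 for 2 ≤ i ≤ n, there exists u ∈ U such that x̂_i(u) = a_i for every i. (This is the surjectivity, onto the punctured generalized Fermat curve, of the map q(u) = [1, x̂_1(u), …, x̂_n(u)].) -/
/-!
The point `u` is found in two steps. The relations `r i + a₁ᵏ + aᵢᵏ = 0` say that `-a₁ᵏ` is
none of the branch points, so some `u₀` has `p u₀ = -a₁ᵏ`, and there `exp (f i u₀) = aᵢᵏ`.
Hence `exp (f i u₀ / k)` is `aᵢ` up to a `k`-th root of unity, i.e. `aᵢ = exp ((f i u₀ + 2πi mᵢ) / k)`
for some integer `mᵢ`, and the deck transformation realizing the shifts `(mᵢ)` moves `u₀` to `u`.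
-/

open Complex

theorem Complex.exists_int_exp_div_eq_of_exp_eq_pow {k : ℕ} (hk : k ≠ 0) {w z : ℂ}
    (h : exp w = z ^ k) : ∃ m : ℤ, exp ((w + 2 * Real.pi * I * m) / k) = z := by
  have hz : z ≠ 0 := by
    rintro rfl
    exact exp_ne_zero w (h.trans (zero_pow hk))
  rw [← exp_log hz, ← exp_nat_mul] at h
  obtain ⟨m, hm⟩ := exp_eq_exp_iff_exists_int.1 h
  refine ⟨-m, ?_⟩
  have hkc : (k : ℂ) ≠ 0 := Nat.cast_ne_zero.2 hk
  rw [hm]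
  convert exp_log hz using 2
  push_cast
  field_simp
  ring

theorem neg_pow_notMem_range_of_fermat_relations {n k : ℕ} {r a : Fin n → ℂ} {i₀ : Fin n}
    (hr₀ : r i₀ = 0) (ha : ∀ i, a i ≠ 0)
    (hrel : ∀ i, i ≠ i₀ → r i + a i₀ ^ k + a i ^ k = 0) :
    -a i₀ ^ k ∉ Set.range r := by
  rintro ⟨i, hi⟩
  by_cases h : i = i₀
  · subst h
    exact pow_ne_zero k (ha i) (by linear_combination hi - hr₀)
  · exact pow_ne_zero k (ha i) (by linear_combination hrel i h - hi)

/-- Surjectivity, onto the punctured generalized Fermat curve, of the map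
`q(u) = [1, x̂_1(u), …, x̂_n(u)]`, where `x̂_i = exp (f_i / k)` are the chosen `k`-th
roots of `−p` and `p − r_i`. -/
theorem surjectivity_onto_punctured_fermat (k n : ℕ) (hk : 2 ≤ k) (hn : 2 ≤ n)
    {U : Type*}
    (r : Fin n → ℂ) (hr0 : r ⟨0, by omega⟩ = 0)
    (p : U → ℂ) (hrange : Set.range p = (Set.range r)ᶜ)
    (f : Fin n → U → ℂ)
    (hf0 : ∀ u, Complex.exp (f ⟨0, by omega⟩ u) = -p u)
    (hfi : ∀ i : Fin n, i ≠ ⟨0, by omega⟩ → ∀ u, Complex.exp (f i u) = p u - r i)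
    (hdeck : ∀ j : Fin n → ℤ, ∃ φ : U → U, p ∘ φ = p ∧
      ∀ i u, f i (φ u) = f i u + 2 * Real.pi * Complex.I * (j i : ℂ))
    (a : Fin n → ℂ) (ha : ∀ i, a i ≠ 0)
    (hrel : ∀ i : Fin n, i ≠ ⟨0, by omega⟩ → r i + a ⟨0, by omega⟩ ^ k + a i ^ k = 0) :
    ∃ u : U, ∀ i, Complex.exp (f i u / (k : ℂ)) = a i := by
  obtain ⟨u₀, hu₀⟩ : -a ⟨0, by omega⟩ ^ k ∈ Set.range p :=
    hrange ▸ Set.mem_compl (neg_pow_notMem_range_of_fermat_relations hr0 ha hrel)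
  have hexp : ∀ i, exp (f i u₀) = a i ^ k := by
    intro i
    by_cases h : i = ⟨0, by omega⟩
    · subst h
      rw [hf0, hu₀, neg_neg]
    · rw [hfi i h, hu₀]
      linear_combination -hrel i h
  choose m hm using fun i => exists_int_exp_div_eq_of_exp_eq_pow (by omega) (hexp i)
  obtain ⟨φ, -, hφ⟩ := hdeck m
  exact ⟨φ u₀, fun i => by rw [hφ, hm]⟩
end
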